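/- arXiv:math/0604280 — 3 statements merged into one kernel-verified Lean document; each statement's English description precedes it below -/
import Mathlib

section
/- For every integer n ≥ 1, the Fibonacci number F_n equals the alternating sum over all integers k of (-1)^k times the binomial coefficient C(n-1, floor((n-1-5k)/2)). -/
/-!
Write `S(c, p) = ∑ₖ (-1)^k C(p, ⌊(c - 5k)/2⌋)`, so the right-hand side is `S(n-1, n-1)`.
Pascal's rule gives `S(c, p+1) = S(c, p) + S(c-2, p)`; the substitution `k ↦ -k` together
with `C(p, j) = C(p, p-j)` gives `S(c, p) = S(2p+1-c, p)`; and `k ↦ k+1` gives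
`S(c, p) = -S(c-5, p)`. Combining the last two, `S(p-2, p) = S(p+3, p) = -S(p-2, p) = 0`, and
then `S(m+2, m+2) = S(m+1, m+1) + S(m, m) + S(m-2, m)` is the Fibonacci recursion.
-/

/-- Binomial coefficient `C(m, j)` with integer lower index, zero when `j < 0`. -/
def icho (m : ℕ) (j : ℤ) : ℤ := if 0 ≤ j then (m.choose j.toNat : ℤ) else 0

lemma icho_of_neg (m : ℕ) {j : ℤ} (h : j < 0) : icho m j = 0 := if_neg (by omega)

lemma icho_of_lt (m : ℕ) {j : ℤ} (h : (m : ℤ) < j) : icho m j = 0 := by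
  rw [icho, if_pos (by omega), Nat.choose_eq_zero_of_lt (by omega), Nat.cast_zero]

lemma icho_symm (m : ℕ) (j : ℤ) : icho m j = icho m (m - j) := by
  rcases lt_or_ge j 0 with hneg | hnonneg
  · rw [icho_of_neg m hneg, icho_of_lt m (by omega)]
  rcases le_or_gt j m with hle | hlt
  · rw [icho, icho, if_pos hnonneg, if_pos (by omega),
      show ((m : ℤ) - j).toNat = m - j.toNat by omega, Nat.choose_symm (by omega)]
  · rw [icho_of_lt m hlt, icho_of_neg m (by omega)]

lemma icho_succ (m : ℕ) (j : ℤ) : icho (m + 1) j = icho m j + icho m (j - 1) := by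
  rcases lt_or_ge j 1 with hlt | hge
  · rcases lt_or_ge j 0 with hneg | hnonneg
    · simp only [icho_of_neg _ hneg, icho_of_neg _ (show j - 1 < 0 by omega), add_zero]
    · obtain rfl : j = 0 := by omega
      simp [icho]
  · rw [icho, icho, icho, if_pos (by omega), if_pos (by omega), if_pos (by omega),
      show j.toNat = (j - 1).toNat + 1 by omega, Nat.choose_succ_succ', Nat.cast_add, add_comm]

lemma neg_one_pow_natAbs_add_one (k : ℤ) :
    (-1 : ℤ) ^ (k + 1).natAbs = -(-1 : ℤ) ^ k.natAbs := by
  simp only [← Int.coe_negOnePow, Int.negOnePow_succ, Units.val_neg, Int.cast_neg]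

def andrewsTerm (c : ℤ) (p : ℕ) (k : ℤ) : ℤ :=
  (-1 : ℤ) ^ k.natAbs * icho p ((c - 5 * k).fdiv 2)

noncomputable def andrewsSum (c : ℤ) (p : ℕ) : ℤ :=
  ∑ᶠ k : ℤ, andrewsTerm c p k

lemma support_andrewsTerm_subset (c : ℤ) (p : ℕ) {a b : ℤ} (ha : 5 * a ≤ c - 2 * p - 1)
    (hb : c ≤ 5 * b) : Function.support (andrewsTerm c p) ⊆ Finset.Icc a b := by
  intro k hk
  rw [Finset.coe_Icc, Set.mem_Icc]
  by_contra hout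
  apply hk
  rw [andrewsTerm, Int.fdiv_eq_ediv_of_nonneg _ zero_le_two]
  rcases lt_or_ge k a with hka | hak
  · rw [icho_of_lt p (by omega), mul_zero]
  · rw [icho_of_neg p (by omega), mul_zero]

lemma finite_support_andrewsTerm (c : ℤ) (p : ℕ) :
    (Function.support (andrewsTerm c p)).Finite :=
  (Finset.Icc (-|c| - 2 * p - 1) (|c| + 2 * p + 1)).finite_toSet.subset
    (support_andrewsTerm_subset c p (by cases abs_cases c <;> omega)
      (by cases abs_cases c <;> omega))

lemma andrewsSum_eq_sum_Icc (c : ℤ) (p : ℕ) {a b : ℤ} (ha : 5 * a ≤ c - 2 * p - 1)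
    (hb : c ≤ 5 * b) : andrewsSum c p = ∑ k ∈ Finset.Icc a b, andrewsTerm c p k :=
  finsum_eq_finsetSum_of_support_subset _ (support_andrewsTerm_subset c p ha hb)

lemma andrewsSum_succ (c : ℤ) (p : ℕ) :
    andrewsSum c (p + 1) = andrewsSum c p + andrewsSum (c - 2) p := by
  have hterm (k : ℤ) : andrewsTerm c (p + 1) k = andrewsTerm c p k + andrewsTerm (c - 2) p k := by
    have hfloor : (c - 5 * k).fdiv 2 - 1 = (c - 2 - 5 * k).fdiv 2 := by
      simp only [Int.fdiv_eq_ediv_of_nonneg _ zero_le_two]; omega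
    rw [andrewsTerm, andrewsTerm, andrewsTerm, icho_succ, hfloor, mul_add]
  simp only [andrewsSum, hterm]
  exact finsum_add_distrib (finite_support_andrewsTerm c p) (finite_support_andrewsTerm (c - 2) p)

lemma andrewsSum_reflect (c : ℤ) (p : ℕ) : andrewsSum c p = andrewsSum (2 * p + 1 - c) p := by
  have hterm (k : ℤ) : andrewsTerm c p k = andrewsTerm (2 * p + 1 - c) p (-k) := by
    have hfloor : (p : ℤ) - (c - 5 * k).fdiv 2 = (2 * p + 1 - c - 5 * -k).fdiv 2 := by
      simp only [Int.fdiv_eq_ediv_of_nonneg _ zero_le_two]; omega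
    rw [andrewsTerm, andrewsTerm, Int.natAbs_neg, icho_symm, hfloor]
  simp only [andrewsSum, hterm]
  exact finsum_comp_equiv (Equiv.neg ℤ)

lemma andrewsSum_sub_five (c : ℤ) (p : ℕ) : andrewsSum (c - 5) p = -andrewsSum c p := by
  have hterm (k : ℤ) : andrewsTerm (c - 5) p k = -andrewsTerm c p (k + 1) := by
    rw [andrewsTerm, andrewsTerm, neg_one_pow_natAbs_add_one,
      show c - 5 * (k + 1) = c - 5 - 5 * k by ring, neg_mul, neg_neg]
  simp only [andrewsSum, hterm, finsum_neg_distrib]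
  exact congrArg Neg.neg (finsum_comp_equiv (Equiv.addRight (1 : ℤ)))

lemma andrewsSum_sub_two_self (p : ℕ) : andrewsSum (p - 2) p = 0 := by
  have h := andrewsSum_sub_five (2 * p + 1 - (p - 2)) p
  rw [← andrewsSum_reflect, show 2 * (p : ℤ) + 1 - (p - 2) - 5 = p - 2 by ring] at h
  omega

lemma andrewsSum_self_add_two (m : ℕ) :
    andrewsSum (m + 2) (m + 2) = andrewsSum (m + 1) (m + 1) + andrewsSum m m := by
  have hleft : andrewsSum (m + 2) (m + 1) = andrewsSum (m + 1) (m + 1) := by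
    rw [andrewsSum_reflect]; push_cast; ring_nf
  have hright : andrewsSum m (m + 1) = andrewsSum m m := by
    rw [andrewsSum_succ, andrewsSum_sub_two_self, add_zero]
  rw [andrewsSum_succ, hleft, add_sub_cancel_right, hright]

lemma fib_succ_eq_andrewsSum (m : ℕ) : (Nat.fib (m + 1) : ℤ) = andrewsSum m m := by
  induction m using Nat.twoStepInduction with
  | zero =>
    rw [Nat.cast_zero, andrewsSum_eq_sum_Icc 0 0 (a := -1) (b := 0) (by norm_num) (by norm_num)]
    decide
  | one =>
    rw [Nat.cast_one, andrewsSum_eq_sum_Icc 1 1 (a := -1) (b := 1) (by norm_num) (by norm_num)]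
    decide
  | more m ih₀ ih₁ =>
    rw [Nat.fib_add_two, Nat.cast_add, ih₀, ih₁]
    push_cast
    rw [andrewsSum_self_add_two, add_comm]

/-- Andrews' identity (1):
`F_n = Σ_{k ∈ ℤ} (-1)^k C(n-1, ⌊(n-1-5k)/2⌋)` for `n ≥ 1`. -/
theorem andrews_identity_one (n : ℕ) (hn : 1 ≤ n) :
    (Nat.fib n : ℤ) =
      ∑ᶠ k : ℤ, (-1 : ℤ) ^ k.natAbs * icho (n - 1) (((n : ℤ) - 1 - 5 * k).fdiv 2) := by
  obtain ⟨m, rfl⟩ : ∃ m, n = m + 1 := ⟨n - 1, by omega⟩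
  rw [fib_succ_eq_andrewsSum, andrewsSum, Nat.add_sub_cancel, Nat.cast_succ, add_sub_cancel_right]
  rfl
end

section
/- For every natural number n, F_{2n+1} = Σ_{j ∈ ℤ} [ C(2n, n-5j) - C(2n, n-5j-2) ]. -/
lemma icho_ne_zero_bounds {m : ℕ} {k : ℤ} (h : icho m k ≠ 0) : 0 ≤ k ∧ k ≤ m := by
  unfold icho at h
  split_ifs at h with h0
  · refine ⟨h0, ?_⟩
    by_contra hk
    push_neg at hk
    have : m < k.toNat := by omega
    simp [Nat.choose_eq_zero_of_lt this] at h
  · simp at h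

lemma icho_pascal (m : ℕ) (k : ℤ) : icho (m + 1) k = icho m k + icho m (k - 1) := by
  unfold icho
  rcases lt_trichotomy k 0 with hk | hk | hk
  · rw [if_neg (by omega), if_neg (by omega), if_neg (by omega)]; ring
  · subst hk; norm_num
  · rw [if_pos (by omega), if_pos (by omega), if_pos (by omega)]
    obtain ⟨t, rfl⟩ : ∃ t : ℕ, k = (t : ℤ) + 1 := ⟨(k - 1).toNat, by omega⟩
    have h1 : ((t : ℤ) + 1).toNat = t + 1 := by omega
    have h2 : ((t : ℤ) + 1 - 1).toNat = t := by omega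
    rw [h1, h2, Nat.choose_succ_succ']
    push_cast; ring

/-- Sum over the residue class `r mod 5` of binomial coefficients `C(m, ·)`. -/
noncomputable def T (m : ℕ) (r : ℤ) : ℤ := ∑ᶠ j : ℤ, icho m (r - 5 * j)

lemma T_support_finite (m : ℕ) (r : ℤ) :
    (Function.support fun j : ℤ => icho m (r - 5 * j)).Finite := by
  apply Set.Finite.subset (Set.finite_Icc (-(r.natAbs + m : ℤ)) (r.natAbs + m : ℤ))
  intro j hj
  have := icho_ne_zero_bounds hj
  simp only [Set.mem_Icc]
  omega

lemma T_succ (m : ℕ) (r : ℤ) : T (m + 1) r = T m r + T m (r - 1) := by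
  unfold T
  rw [← finsum_add_distrib (T_support_finite m r)
      (by have h := T_support_finite m (r - 1); simp only [sub_sub, add_comm] at h ⊢; exact h)]
  apply finsum_congr
  intro j
  rw [icho_pascal]
  ring_nf

lemma T_shift (m : ℕ) (r : ℤ) : T m (r - 5) = T m r := by
  unfold T
  symm
  rw [← finsum_comp_equiv (Equiv.addRight (1 : ℤ))]
  apply finsum_congr
  intro j
  simp only [Equiv.coe_addRight]
  congr 1
  ring

lemma T_zero (r : ℤ) : T 0 r = if (5 : ℤ) ∣ r then 1 else 0 := by
  unfold T
  have hicho : ∀ k : ℤ, icho 0 k = if k = 0 then 1 else 0 := by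
    intro k
    unfold icho
    rcases lt_trichotomy k 0 with h | h | h
    · rw [if_neg (by omega), if_neg (by omega)]
    · subst h; norm_num
    · rw [if_pos h.le, if_neg (by omega), Nat.choose_eq_zero_of_lt (by omega)]
      norm_num
  by_cases hd : (5 : ℤ) ∣ r
  · obtain ⟨c, rfl⟩ := hd
    rw [if_pos ⟨c, rfl⟩]
    rw [finsum_eq_single _ c]
    · rw [hicho]; simp
    · intro x hx
      rw [hicho, if_neg (by omega)]
  · rw [if_neg hd]
    apply finsum_eq_zero_of_forall_eq_zero
    intro j
    rw [hicho, if_neg]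
    intro h
    exact hd ⟨j, by omega⟩

lemma AB (n : ℕ) :
    T (2 * n) n - T (2 * n) ((n : ℤ) - 2) = Nat.fib (2 * n + 1) ∧
    T (2 * n) ((n : ℤ) + 1) - T (2 * n) ((n : ℤ) + 2) = Nat.fib (2 * n) := by
  induction n with
  | zero =>
    constructor <;> simp [T_zero] <;> decide
  | succ n ih =>
    obtain ⟨hA, hB⟩ := ih
    have e2 : ∀ r : ℤ, T (2 * n + 2) r = T (2 * n) r + 2 * T (2 * n) (r - 1)
        + T (2 * n) (r - 2) := by
      intro r
      rw [show 2 * n + 2 = (2 * n + 1) + 1 from rfl, T_succ, T_succ, T_succ]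
      ring
    have h2 : 2 * (n + 1) = 2 * n + 2 := by ring
    have key1 : T (2 * n) ((n : ℤ) - 3) = T (2 * n) ((n : ℤ) + 2) := by
      have := T_shift (2 * n) ((n : ℤ) + 2)
      rw [show (n : ℤ) + 2 - 5 = (n : ℤ) - 3 by ring] at this
      exact this
    have key2 : T (2 * n) ((n : ℤ) + 3) = T (2 * n) ((n : ℤ) - 2) := by
      have := T_shift (2 * n) ((n : ℤ) + 3)
      rw [show (n : ℤ) + 3 - 5 = (n : ℤ) - 2 by ring] at this
      exact this.symm
    have hfib1 : (Nat.fib (2 * n + 2 + 1) : ℤ)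
        = 2 * Nat.fib (2 * n + 1) + Nat.fib (2 * n) := by
      rw [show 2 * n + 2 + 1 = (2 * n + 1) + 2 from by ring, Nat.fib_add_two,
        show 2 * n + 1 + 1 = 2 * n + 2 from rfl, Nat.fib_add_two]
      push_cast; ring
    have hfib2 : (Nat.fib (2 * n + 2) : ℤ)
        = Nat.fib (2 * n + 1) + Nat.fib (2 * n) := by
      rw [Nat.fib_add_two]; push_cast; ring
    constructor
    · rw [h2, hfib1]
      rw [show (↑(n + 1) : ℤ) = (n : ℤ) + 1 by push_cast; ring]
      rw [show ((n : ℤ) + 1 - 2) = (n : ℤ) - 1 by ring]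
      rw [e2, e2]
      rw [show ((n : ℤ) + 1 - 1) = (n : ℤ) by ring,
        show ((n : ℤ) + 1 - 2) = (n : ℤ) - 1 by ring,
        show ((n : ℤ) - 1 - 1) = (n : ℤ) - 2 by ring,
        show ((n : ℤ) - 1 - 2) = (n : ℤ) - 3 by ring, key1]
      linarith [hA, hB]
    · rw [h2, hfib2]
      rw [show (↑(n + 1) : ℤ) = (n : ℤ) + 1 by push_cast; ring]
      rw [show ((n : ℤ) + 1 + 1) = (n : ℤ) + 2 by ring,
        show ((n : ℤ) + 1 + 2) = (n : ℤ) + 3 by ring]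
      rw [e2, e2]
      rw [show ((n : ℤ) + 2 - 1) = (n : ℤ) + 1 by ring,
        show ((n : ℤ) + 2 - 2) = (n : ℤ) by ring,
        show ((n : ℤ) + 3 - 1) = (n : ℤ) + 2 by ring,
        show ((n : ℤ) + 3 - 2) = (n : ℤ) + 1 by ring, key2]
      linarith [hA, hB]

/-- Identity (6): `F_{2n+1} = Σ_{j ∈ ℤ} [C(2n, n-5j) - C(2n, n-5j-2)]`. -/
theorem fib_odd_binomial_sum' (n : ℕ) :
    (Nat.fib (2 * n + 1) : ℤ) =
      ∑ᶠ j : ℤ, (icho (2 * n) ((n : ℤ) - 5 * j) - icho (2 * n) ((n : ℤ) - 5 * j - 2)) := by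
  have h := (AB n).1
  rw [← h]
  unfold T
  have hg : (Function.support fun j : ℤ => icho (2 * n) ((n : ℤ) - 5 * j - 2)).Finite := by
    apply Set.Finite.subset (Set.finite_Icc (-(n + 2 : ℤ)) ((n : ℤ) + 2))
    intro j hj
    have := icho_ne_zero_bounds hj
    simp only [Set.mem_Icc]
    omega
  rw [finsum_sub_distrib (T_support_finite (2 * n) n) hg]
  congr 1
  apply finsum_congr
  intro j
  congr 1
  ring
end

section
/- Let s(0,·) : ℤ → ℝ be any function that is nonzero at only finitely many integers, let α, β ∈ ℝ, and define s(n,k) = α·s(n-1,k-1) + β·s(n-1,k) + α·s(n-1,k+1) for n ≥ 1. Then for any fixed k₀ ∈ ℤ, the sequence d_n = Σ_{j ∈ ℤ} [ s(n, k₀-5j) - s(n, k₀-5j-1) ] satisfies d_n = (2β - α)·d_{n-1} + (αβ + α² - β²)·d_{n-2} for all n ≥ 2. -/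
/-- The main theorem: for any array built from a finitely supported first row by the
three-term recurrence with weights `α, β, α`, the alternating 5-periodic sums along rows
satisfy the second-order recurrence `d_n = (2β-α)d_{n-1} + (αβ+α²-β²)d_{n-2}`. -/
theorem main_theorem (α β : ℝ) (s : ℕ → ℤ → ℝ)
    (h0 : (Function.support (s 0)).Finite)
    (hrec : ∀ n : ℕ, 1 ≤ n → ∀ k : ℤ,
      s n k = α * s (n - 1) (k - 1) + β * s (n - 1) k + α * s (n - 1) (k + 1))
    (k₀ : ℤ)
    (d : ℕ → ℝ)
    (hd : ∀ n : ℕ, d n = ∑ᶠ j : ℤ, (s n (k₀ - 5 * j) - s n (k₀ - 5 * j - 1))) :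
    ∀ n : ℕ, 2 ≤ n →
      d n = (2 * β - α) * d (n - 1) + (α * β + α ^ 2 - β ^ 2) * d (n - 2) := by
  -- every row has finite support
  have hfin : ∀ n, (Function.support (s n)).Finite := by
    intro n
    induction n with
    | zero => exact h0
    | succ n ih =>
      have hsub : Function.support (s (n + 1)) ⊆
          ((fun k => k + 1) '' Function.support (s n)) ∪ Function.support (s n) ∪
            ((fun k => k - 1) '' Function.support (s n)) := by
        intro k hk
        rw [Function.mem_support, hrec (n + 1) (by omega) k] at hk
        simp only [Nat.add_sub_cancel] at hk
        have h1 : s n (k - 1) ≠ 0 ∨ s n k ≠ 0 ∨ s n (k + 1) ≠ 0 := by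
          by_contra h
          push_neg at h
          obtain ⟨a, b, c⟩ := h
          rw [a, b, c] at hk
          simp at hk
        rcases h1 with h | h | h
        · exact Or.inl (Or.inl ⟨k - 1, h, by ring⟩)
        · exact Or.inl (Or.inr h)
        · exact Or.inr ⟨k + 1, h, by ring⟩
      exact (((ih.image _).union ih).union (ih.image _)).subset hsub
  -- the arithmetic-progression slices have finite support
  have hfinj : ∀ (n : ℕ) (k : ℤ), (Function.support fun j : ℤ => s n (k - 5 * j)).Finite := by
    intro n k
    have hinj : Function.Injective fun j : ℤ => k - 5 * j := by
      intro a b hab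
      dsimp at hab
      omega
    exact ((hfin n).preimage hinj.injOn).subset fun j hj => hj
  have hsm : ∀ (c : ℝ) (f : ℤ → ℝ), (Function.support f).Finite →
      (Function.support fun j => c * f j).Finite := by
    intro c f hf
    refine hf.subset fun j hj => ?_
    simp only [Function.mem_support] at hj ⊢
    intro h
    exact hj (by rw [h, mul_zero])
  set A : ℕ → ℤ → ℝ := fun n k => ∑ᶠ j : ℤ, s n (k - 5 * j) with hA
  -- d in terms of A
  have hdA : ∀ n, d n = A n k₀ - A n (k₀ - 1) := by
    intro n
    rw [hd n]
    have h1 : ∀ j : ℤ, s n (k₀ - 5 * j) - s n (k₀ - 5 * j - 1)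
        = s n (k₀ - 5 * j) - s n (k₀ - 1 - 5 * j) := by
      intro j
      have : k₀ - 5 * j - 1 = k₀ - 1 - 5 * j := by ring
      rw [this]
    rw [finsum_congr h1, finsum_sub_distrib (hfinj n k₀) (hfinj n (k₀ - 1))]
  -- A satisfies the same recurrence
  have hArec : ∀ (n : ℕ) (k : ℤ), A (n + 1) k
      = α * A n (k - 1) + β * A n k + α * A n (k + 1) := by
    intro n k
    have h1 : ∀ j : ℤ, s (n + 1) (k - 5 * j)
        = α * s n (k - 1 - 5 * j) + β * s n (k - 5 * j) + α * s n (k + 1 - 5 * j) := by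
      intro j
      rw [hrec (n + 1) (by omega) (k - 5 * j)]
      simp only [Nat.add_sub_cancel]
      have e1 : k - 5 * j - 1 = k - 1 - 5 * j := by ring
      have e2 : k - 5 * j + 1 = k + 1 - 5 * j := by ring
      rw [e1, e2]
    have hf1 := hsm α _ (hfinj n (k - 1))
    have hf2 := hsm β _ (hfinj n k)
    have hf3 := hsm α _ (hfinj n (k + 1))
    calc A (n + 1) k
        = ∑ᶠ j : ℤ, (α * s n (k - 1 - 5 * j) + β * s n (k - 5 * j)
            + α * s n (k + 1 - 5 * j)) := finsum_congr h1
      _ = (∑ᶠ j : ℤ, (α * s n (k - 1 - 5 * j) + β * s n (k - 5 * j)))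
            + ∑ᶠ j : ℤ, α * s n (k + 1 - 5 * j) := by
          exact finsum_add_distrib ((hf1.union hf2).subset (Function.support_add _ _)) hf3
      _ = (∑ᶠ j : ℤ, α * s n (k - 1 - 5 * j)) + (∑ᶠ j : ℤ, β * s n (k - 5 * j))
            + ∑ᶠ j : ℤ, α * s n (k + 1 - 5 * j) := by
          rw [finsum_add_distrib hf1 hf2]
      _ = α * A n (k - 1) + β * A n k + α * A n (k + 1) := by
          rw [hA]
          rw [mul_finsum' _ _ (hfinj n (k - 1)), mul_finsum' _ _ (hfinj n k),
            mul_finsum' _ _ (hfinj n (k + 1))]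
  -- A is 5-periodic in k
  have hAper : ∀ (n : ℕ) (k : ℤ), A n (k + 5) = A n k := by
    intro n k
    have h1 : ∀ j : ℤ, s n (k + 5 - 5 * j) = s n (k - 5 * (j - 1)) := by
      intro j
      have : k + 5 - 5 * j = k - 5 * (j - 1) := by ring
      rw [this]
    calc A n (k + 5) = ∑ᶠ j : ℤ, s n (k - 5 * (j - 1)) := finsum_congr h1
      _ = ∑ᶠ j : ℤ, s n (k - 5 * j) := by
          simpa using finsum_comp_equiv (Equiv.subRight (1 : ℤ)) (f := fun j : ℤ => s n (k - 5 * j))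
      _ = A n k := rfl
  -- main computation
  intro n hn
  obtain ⟨m, rfl⟩ : ∃ m, n = m + 2 := ⟨n - 2, by omega⟩
  have e1 : m + 2 - 1 = m + 1 := by omega
  have e2 : m + 2 - 2 = m := by omega
  rw [e1, e2, hdA (m + 2), hdA (m + 1), hdA m]
  have hA2a : A (m + 2) k₀ = α * A (m + 1) (k₀ - 1) + β * A (m + 1) k₀
      + α * A (m + 1) (k₀ + 1) := hArec (m + 1) k₀
  have hA2b : A (m + 2) (k₀ - 1) = α * A (m + 1) (k₀ - 2) + β * A (m + 1) (k₀ - 1)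
      + α * A (m + 1) k₀ := by
    have := hArec (m + 1) (k₀ - 1)
    have e3 : k₀ - 1 - 1 = k₀ - 2 := by ring
    have e4 : k₀ - 1 + 1 = k₀ := by ring
    rwa [e3, e4] at this
  have hB : ∀ x : ℤ, A (m + 1) x = α * A m (x - 1) + β * A m x + α * A m (x + 1) :=
    hArec m
  have hB1 := hB (k₀ - 2)
  have hB2 := hB (k₀ - 1)
  have hB3 := hB k₀
  have hB4 := hB (k₀ + 1)
  have e5 : k₀ - 2 - 1 = k₀ - 3 := by ring
  have e6 : k₀ - 2 + 1 = k₀ - 1 := by ring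
  have e7 : k₀ - 1 - 1 = k₀ - 2 := by ring
  have e8 : k₀ - 1 + 1 = k₀ := by ring
  have e9 : k₀ + 1 - 1 = k₀ := by ring
  have e9b : k₀ + 1 + 1 = k₀ + 2 := by ring
  rw [e5, e6] at hB1
  rw [e7, e8] at hB2
  rw [e9, e9b] at hB4
  have hp : A m (k₀ + 2) = A m (k₀ - 3) := by
    have := hAper m (k₀ - 3)
    have e10 : k₀ - 3 + 5 = k₀ + 2 := by ring
    rw [e10] at this
    exact this
  rw [hA2a, hA2b, hB1, hB2, hB3, hB4]
  linear_combination α ^ 2 * hp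
end
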